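/- arXiv:1505.04755 — 3 statements merged into one kernel-verified Lean document; each statement's English description precedes it below -/
import Mathlib

section
/- Let N ≥ 1 be a natural number and α the unique natural number with 3^α ≤ N < 3^{α+1}. If (d_1,...,d_n) is a sequence of integers with each d_j ≥ 3 and ∏_{j=1}^n ∏_{i=1,\ d_j ∤ i}^{d_j - 1} (2^i - 1) ≤ N, then ∏_{j=1}^n φ(d_j) ≤ 2^α, where φ is Euler's totient function. -/
/-!
The condition `d ∤ i` excludes nothing since `i < d`, so `λ(d)` contains the factors
`2^i - 1 ≥ 3` for `2 ≤ i ≤ d - 1` and `λ(d) ≥ 3^(d-2) ≥ 3^(φ(d)-1)`.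
Hence `3^(∑ (φ(d_j) - 1)) ≤ N < 3^(α+1)`, i.e. `∑ (φ(d_j) - 1) ≤ α`, and `φ(d_j) ≤ 2^(φ(d_j)-1)`
turns this into `∏ φ(d_j) ≤ 2^α`.
-/

open Finset

/-- The paper's `λ_j` for a place with residue field of size `2` and local degree `d`. -/
def lambdaFactor (d : ℕ) : ℕ :=
  ∏ i ∈ (Icc 1 (d - 1)).filter (fun i => ¬ d ∣ i), (2 ^ i - 1)

lemma filter_not_dvd_Icc_one_sub_one (d : ℕ) :
    (Icc 1 (d - 1)).filter (fun i => ¬ d ∣ i) = Icc 1 (d - 1) := by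
  refine filter_true_of_mem fun i hi hdvd => ?_
  rw [mem_Icc] at hi
  have := Nat.le_of_dvd (by omega) hdvd
  omega

lemma lambdaFactor_eq_prod_Icc (d : ℕ) :
    lambdaFactor d = ∏ i ∈ Icc 1 (d - 1), (2 ^ i - 1) := by
  rw [lambdaFactor, filter_not_dvd_Icc_one_sub_one]

lemma three_pow_le_prod_Icc_two_pow_sub_one (m : ℕ) :
    3 ^ m ≤ ∏ i ∈ Icc 1 (m + 1), (2 ^ i - 1) := by
  induction m with
  | zero => simp
  | succ m ih =>
    have h3 : 3 ≤ 2 ^ (m + 2) - 1 := by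
      have : 2 ^ 2 ≤ 2 ^ (m + 2) := Nat.pow_le_pow_right two_pos (by omega)
      omega
    rw [prod_Icc_succ_top (by omega), pow_succ]
    exact Nat.mul_le_mul ih h3

lemma three_pow_totient_sub_one_le_lambdaFactor (d : ℕ) :
    3 ^ (d.totient - 1) ≤ lambdaFactor d := by
  rcases Nat.lt_or_ge d 2 with hd | hd
  · interval_cases d <;> simp [lambdaFactor]
  have hφ : d.totient - 1 ≤ d - 2 := by
    have := Nat.totient_lt d (by omega)
    omega
  calc 3 ^ (d.totient - 1) ≤ 3 ^ (d - 2) := Nat.pow_le_pow_right (by norm_num) hφ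
    _ ≤ ∏ i ∈ Icc 1 (d - 2 + 1), (2 ^ i - 1) := three_pow_le_prod_Icc_two_pow_sub_one _
    _ = lambdaFactor d := by rw [lambdaFactor_eq_prod_Icc, show d - 2 + 1 = d - 1 by omega]

lemma le_two_pow_sub_one (n : ℕ) : n ≤ 2 ^ (n - 1) := by
  cases n with
  | zero => exact Nat.zero_le _
  | succ n => exact Nat.lt_two_pow_self

theorem totient_prod_le_of_lambda_prod_le_general (N α n : ℕ)
    (hα₂ : N < 3 ^ (α + 1))
    (d : Fin n → ℕ)
    (hprod : (∏ j, ∏ i ∈ (Finset.Icc 1 (d j - 1)).filter (fun i => ¬ d j ∣ i), (2 ^ i - 1)) ≤ N) :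
    (∏ j, Nat.totient (d j)) ≤ 2 ^ α := by
  have hsum : ∑ j, (Nat.totient (d j) - 1) ≤ α := by
    have : 3 ^ (∑ j, (Nat.totient (d j) - 1)) < 3 ^ (α + 1) :=
      calc 3 ^ (∑ j, (Nat.totient (d j) - 1)) = ∏ j, 3 ^ (Nat.totient (d j) - 1) :=
            (prod_pow_eq_pow_sum ..).symm
        _ ≤ ∏ j, lambdaFactor (d j) :=
            prod_le_prod' fun j _ => three_pow_totient_sub_one_le_lambdaFactor _
        _ ≤ N := hprod
        _ < 3 ^ (α + 1) := hα₂
    exact Nat.lt_succ_iff.mp ((Nat.pow_lt_pow_iff_right (by norm_num)).mp this)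
  calc ∏ j, Nat.totient (d j) ≤ ∏ j, 2 ^ (Nat.totient (d j) - 1) :=
        prod_le_prod' fun j _ => le_two_pow_sub_one _
    _ = 2 ^ (∑ j, (Nat.totient (d j) - 1)) := prod_pow_eq_pow_sum ..
    _ ≤ 2 ^ α := Nat.pow_le_pow_right two_pos hsum

/-- Combinatorial core of the effective Prasad–Rapinchuk bound: if `3^α ≤ N < 3^{α+1}`
and `(d_1, …, d_n)` are integers `≥ 3` whose lambda factors
`λ_j = ∏_{1 ≤ i ≤ d_j - 1, d_j ∤ i} (2^i - 1)` have product at most `N`, then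
`∏_j φ(d_j) ≤ 2^α`. -/
theorem totient_prod_le_of_lambda_prod_le (N α n : ℕ) (hN : 1 ≤ N)
    (hα₁ : 3 ^ α ≤ N) (hα₂ : N < 3 ^ (α + 1))
    (d : Fin n → ℕ) (hd : ∀ j, 3 ≤ d j)
    (hprod : (∏ j, ∏ i ∈ (Finset.Icc 1 (d j - 1)).filter (fun i => ¬ d j ∣ i), (2 ^ i - 1)) ≤ N) :
    (∏ j, Nat.totient (d j)) ≤ 2 ^ α :=
  totient_prod_le_of_lambda_prod_le_general N α n hα₂ d hprod
end

section
/- For all integers d ≥ 29, the product ∏_{i=1}^{d-1} i!/(2π)^{i+1} is greater than 1. -/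
/-!
The factor `i! / (2π)^(i+1)` exceeds `1` as soon as `(2π)^(i+1) < i!`, which holds from `i = 28`
on: it holds at `i = 28`, and passing from `i` to `i + 1` multiplies the left side by `2π` and
the right side by `i + 1 > 2π`. Hence the product only grows for `d ≥ 29`, and its value at
`d = 29` exceeds `1` by a finite computation using `2π < 6.3`, namely `6.3 ^ 434 < ∏_{i ≤ 28} i!`.
-/

open Real Finset Nat

lemma two_mul_pi_lt : 2 * π < 63 / 10 := by
  linarith [pi_lt_d2]

lemma pow_succ_lt_factorial_of_le {x : ℝ} {n m : ℕ} (hx₀ : 0 ≤ x) (hxn : x ≤ n + 1)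
    (hn : x ^ (n + 1) < n !) (hnm : n ≤ m) : x ^ (m + 1) < m ! := by
  induction m, hnm using Nat.le_induction with
  | base => exact hn
  | succ m hnm ih =>
    have hxm : x ≤ m + 1 := hxn.trans (by exact_mod_cast Nat.succ_le_succ hnm)
    calc x ^ (m + 1 + 1) = x ^ (m + 1) * x := pow_succ _ _
      _ ≤ x ^ (m + 1) * (m + 1) := by gcongr
      _ < m ! * (m + 1) := by gcongr
      _ = (m + 1)! := by push_cast [Nat.factorial_succ]; ring

lemma two_mul_pi_pow_succ_lt_factorial {n : ℕ} (hn : 28 ≤ n) : (2 * π) ^ (n + 1) < n ! := by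
  refine pow_succ_lt_factorial_of_le (by positivity) ?_ ?_ hn
  · push_cast
    linarith [two_mul_pi_lt]
  · calc (2 * π) ^ (28 + 1) < (63 / 10 : ℝ) ^ (28 + 1) := by gcongr; exact two_mul_pi_lt
      _ < ((28 ! : ℕ) : ℝ) := by norm_num [Nat.factorial]

lemma one_lt_prod_Icc_one_28_factorial_div_two_mul_pi_pow :
    1 < ∏ i ∈ Icc 1 28, (i ! : ℝ) / (2 * π) ^ (i + 1) := by
  have hexp : ∑ i ∈ Icc 1 28, (i + 1) = 434 := by decide +kernel
  have hprod : (63 / 10 : ℝ) ^ 434 < ∏ i ∈ Icc 1 28, (i ! : ℝ) := by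
    rw [div_pow, div_lt_iff₀ (by positivity), mul_comm]
    -- `+kernel`: the elaborator refuses to evaluate powers with exponent above 256.
    exact_mod_cast (by decide +kernel : 63 ^ 434 < 10 ^ 434 * ∏ i ∈ Icc 1 28, i !)
  rw [prod_div_distrib, prod_pow_eq_pow_sum, hexp, one_lt_div (by positivity)]
  calc (2 * π) ^ 434 < (63 / 10) ^ 434 := by gcongr; exact two_mul_pi_lt
    _ < _ := hprod

open Real in
/-- For all integers `d ≥ 29`, `∏_{i=1}^{d-1} i!/(2π)^{i+1} > 1`. -/
theorem prod_factorial_div_two_pi_pow_gt_one (d : ℕ) (hd : 29 ≤ d) :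
    1 < ∏ i ∈ Finset.Icc 1 (d - 1), (Nat.factorial i : ℝ) / (2 * π) ^ (i + 1) := by
  calc 1 < ∏ i ∈ Icc 1 28, (i ! : ℝ) / (2 * π) ^ (i + 1) :=
        one_lt_prod_Icc_one_28_factorial_div_two_mul_pi_pow
    _ ≤ ∏ i ∈ Icc 1 (d - 1), (i ! : ℝ) / (2 * π) ^ (i + 1) := by
      refine prod_le_prod_of_subset_of_one_le (Icc_subset_Icc_right (by omega))
        (fun i _ ↦ by positivity) fun i hi hi28 ↦ ?_
      rw [one_le_div (by positivity)]
      simp only [mem_Icc, not_and, not_le] at hi hi28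
      exact (two_mul_pi_pow_succ_lt_factorial (by omega)).le
end

section
/- Let d ≥ 2, q ≥ 2 a prime power, and d_v a divisor of d with d_v ≥ 2, and write n_v = d/d_v. Then the lambda factor λ = (∏_{i=1}^{d-1}(q^{i+1}-1)) / (∏_{i=1}^{n_v-1}(q^{d_v(i+1)}-1) · ∑_{i=0}^{d_v-1} q^i) is a positive rational number that is ≥ 1, with the convention that the empty product equals 1 when n_v = 1. -/
/-- The local lambda factor
`λ = (∏_{i=1}^{d-1}(q^{i+1}-1)) / ((∏_{i=1}^{n_v-1}(q^{d_v(i+1)}-1)) · ∑_{i=0}^{d_v-1} q^i)`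
at a ramified place with residue field of size `q`, local degree `d_v ∣ d`, `d_v ≥ 2`,
`n_v = d/d_v`, is a positive rational number and is at least `1` (with the convention
that the empty product is `1` when `n_v = 1`). -/
theorem lambda_factor_pos_and_ge_one (q d dv nv : ℕ) (hq2 : 2 ≤ q) (hq : IsPrimePow q)
    (hd : 2 ≤ d) (hdvd : dv ∣ d) (hdv : 2 ≤ dv) (hnv : nv = d / dv) :
    0 < (∏ i ∈ Finset.Icc 1 (d - 1), ((q : ℚ) ^ (i + 1) - 1)) /
          ((∏ i ∈ Finset.Icc 1 (nv - 1), ((q : ℚ) ^ (dv * (i + 1)) - 1)) *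
            ∑ i ∈ Finset.range dv, (q : ℚ) ^ i) ∧
    1 ≤ (∏ i ∈ Finset.Icc 1 (d - 1), ((q : ℚ) ^ (i + 1) - 1)) /
          ((∏ i ∈ Finset.Icc 1 (nv - 1), ((q : ℚ) ^ (dv * (i + 1)) - 1)) *
            ∑ i ∈ Finset.range dv, (q : ℚ) ^ i) := by
  have hqQ : (2:ℚ) ≤ (q:ℚ) := by exact_mod_cast hq2
  have hq1 : (1:ℚ) < (q:ℚ) := by linarith
  have hdpos : 0 < d := by omega
  have hmul : dv * nv = d := by rw [hnv]; exact Nat.mul_div_cancel' hdvd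
  have hnvpos : 1 ≤ nv := by
    rcases Nat.eq_zero_or_pos nv with h | h
    · subst h; simp at hmul; omega
    · exact h
  -- basic factor bound
  have hfac : ∀ k : ℕ, k ≠ 0 → (1:ℚ) ≤ (q:ℚ)^k - 1 := by
    intro k hk
    have h2 : (2:ℚ) ≤ (q:ℚ)^k := le_trans hqQ (le_self_pow₀ (by linarith) hk)
    linarith
  -- sum bounds
  have hsum_pos : (1:ℚ) ≤ ∑ i ∈ Finset.range dv, (q:ℚ)^i := by
    calc (1:ℚ) = (q:ℚ)^0 := by simp
    _ ≤ ∑ i ∈ Finset.range dv, (q:ℚ)^i :=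
      Finset.single_le_sum (f := fun i => (q:ℚ)^i)
        (fun i _ => by positivity) (Finset.mem_range.mpr (by omega))
  have hgeom : (∑ i ∈ Finset.range dv, (q:ℚ)^i) * ((q:ℚ) - 1) = (q:ℚ)^dv - 1 :=
    geom_sum_mul _ _
  have hsum_le : (∑ i ∈ Finset.range dv, (q:ℚ)^i) ≤ (q:ℚ)^dv - 1 := by
    nlinarith [hsum_pos]
  -- the map embedding denominator indices into numerator indices
  set g : ℕ → ℕ := fun i => dv * (i + 1) - 1 with hg
  set T : Finset ℕ := insert (dv - 1) ((Finset.Icc 1 (nv - 1)).image g) with hT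
  have hgmem : ∀ i ∈ Finset.Icc 1 (nv - 1),
      g i + 1 = dv * (i + 1) ∧ dv + 1 ≤ g i ∧ g i ≤ d - 1 := by
    intro i hi
    rw [Finset.mem_Icc] at hi
    have h2 : dv * 2 ≤ dv * (i + 1) := Nat.mul_le_mul_left dv (by omega)
    have h3 : dv * (i + 1) ≤ dv * nv := Nat.mul_le_mul_left dv (by omega)
    simp only [hg]
    omega
  have hTsub : T ⊆ Finset.Icc 1 (d - 1) := by
    intro x hx
    rw [hT, Finset.mem_insert] at hx
    rcases hx with h | h
    · rw [Finset.mem_Icc]; have hdvd_le : dv ≤ d := Nat.le_of_dvd hdpos hdvd; omega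
    · obtain ⟨i, hi, rfl⟩ := Finset.mem_image.mp h
      have := hgmem i hi
      rw [Finset.mem_Icc]; omega
  have hnotmem : dv - 1 ∉ (Finset.Icc 1 (nv - 1)).image g := by
    intro h
    obtain ⟨i, hi, hgi⟩ := Finset.mem_image.mp h
    have h2 := (hgmem i hi).2.1
    rw [hgi] at h2
    omega
  have hinj : Set.InjOn g (Finset.Icc 1 (nv - 1)) := by
    intro a ha b hb hab
    have h1 : 1 ≤ dv * (a + 1) := Nat.one_le_iff_ne_zero.mpr (Nat.mul_ne_zero (by omega) (by omega))
    have h2 : 1 ≤ dv * (b + 1) := Nat.one_le_iff_ne_zero.mpr (Nat.mul_ne_zero (by omega) (by omega))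
    have : dv * (a + 1) = dv * (b + 1) := by simp only [hg] at hab; omega
    have := Nat.eq_of_mul_eq_mul_left (by omega : 0 < dv) this
    omega
  -- product over T
  have hprodT : ∏ i ∈ T, ((q:ℚ)^(i+1) - 1)
      = ((q:ℚ)^dv - 1) * ∏ i ∈ Finset.Icc 1 (nv - 1), ((q:ℚ)^(dv * (i + 1)) - 1) := by
    rw [hT, Finset.prod_insert hnotmem, Finset.prod_image hinj]
    congr 1
    · congr 1; congr 1; omega
    · apply Finset.prod_congr rfl
      intro i hi
      rw [(hgmem i hi).1]
  -- denominator ≤ product over T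
  have hden_pos : 0 < (∏ i ∈ Finset.Icc 1 (nv - 1), ((q:ℚ)^(dv * (i + 1)) - 1)) *
      ∑ i ∈ Finset.range dv, (q:ℚ)^i := by
    apply mul_pos
    · apply Finset.prod_pos
      intro i hi
      have : (1:ℚ) ≤ (q:ℚ)^(dv * (i+1)) - 1 := hfac _ (Nat.mul_ne_zero (by omega) (by omega))
      linarith
    · linarith
  have hprod_pos : 0 < ∏ i ∈ Finset.Icc 1 (nv - 1), ((q:ℚ)^(dv * (i + 1)) - 1) := by
    apply Finset.prod_pos
    intro i hi
    have : (1:ℚ) ≤ (q:ℚ)^(dv * (i+1)) - 1 := hfac _ (Nat.mul_ne_zero (by omega) (by omega))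
    linarith
  have hden_le_T : (∏ i ∈ Finset.Icc 1 (nv - 1), ((q:ℚ)^(dv * (i + 1)) - 1)) *
      (∑ i ∈ Finset.range dv, (q:ℚ)^i) ≤ ∏ i ∈ T, ((q:ℚ)^(i+1) - 1) := by
    rw [hprodT, mul_comm]
    exact mul_le_mul_of_nonneg_right hsum_le (le_of_lt hprod_pos)
  -- product over T ≤ numerator
  have hT_le_num : ∏ i ∈ T, ((q:ℚ)^(i+1) - 1)
      ≤ ∏ i ∈ Finset.Icc 1 (d - 1), ((q:ℚ)^(i+1) - 1) := by
    rw [← Finset.prod_sdiff hTsub]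
    have h1 : (1:ℚ) ≤ ∏ i ∈ Finset.Icc 1 (d - 1) \ T, ((q:ℚ)^(i+1) - 1) := by
      calc (1:ℚ) = ∏ _i ∈ Finset.Icc 1 (d - 1) \ T, (1:ℚ) := by simp
      _ ≤ _ := Finset.prod_le_prod (fun i _ => by norm_num) (fun i _ => hfac _ (by omega))
    have h0 : (0:ℚ) ≤ ∏ i ∈ T, ((q:ℚ)^(i+1) - 1) := by
      apply Finset.prod_nonneg
      intro i hi
      have := hfac (i+1) (by omega)
      linarith
    exact le_mul_of_one_le_left h0 h1
  have hkey : (∏ i ∈ Finset.Icc 1 (nv - 1), ((q:ℚ)^(dv * (i + 1)) - 1)) *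
      (∑ i ∈ Finset.range dv, (q:ℚ)^i)
      ≤ ∏ i ∈ Finset.Icc 1 (d - 1), ((q:ℚ)^(i+1) - 1) := le_trans hden_le_T hT_le_num
  constructor
  · exact div_pos (lt_of_lt_of_le hden_pos hkey) hden_pos
  · rw [one_le_div hden_pos]
    exact hkey
end
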